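/- arXiv:1810.05230 — 2 statements merged into one kernel-verified Lean document; each statement's English description precedes it below -/
import Mathlib

section
/- Let J be as given, with coding graph E_J. If a vertex (μ, eν) of E_J emits a non-positive edge, i.e. there is an edge from (μ, eν) to some (μ_2, e_2ν_2) ∈ J with μ_2 ≼ ν, then (μ, eν) emits no other edge: every (μ_3, e_3ν_3) ∈ J with ν ≼ μ_3 or μ_3 ≼ ν satisfies μ_3 = μ_2. -/
/-- A finite directed multigraph. -/
structure FinGraph where
  V : Type
  E : Type
  fintV : Fintype V
  fintE : Fintype E
  src : E → V
  rng : E → V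

variable {G : FinGraph}

/-- A finite path in the graph `G`: a source vertex together with a compatible
list of edges (a vertex is a path of length 0). -/
structure FPath (G : FinGraph) where
  source : G.V
  edges : List G.E
  head_src : ∀ e ∈ edges.head?, G.src e = source
  chain : edges.Chain' fun e f => G.rng e = G.src f

/-- The range (terminal vertex) of a finite path. -/
def FPath.range (p : FPath G) : G.V :=
  p.edges.getLast?.elim p.source G.rng

/-- The length-0 path at a vertex. -/
def FPath.nil (G : FinGraph) (v : G.V) : FPath G :=
  ⟨v, [], by simp, List.isChain_nil⟩

/-- `p.Prefix q` : the path `p` is an initial segment of the path `q`. -/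
def FPath.Prefix (p q : FPath G) : Prop :=
  p.source = q.source ∧ p.edges <+: q.edges

/-- The path obtained by removing the first edge (the tail `κ` of `ν = eκ`). -/
def FPath.tail (p : FPath G) : FPath G where
  source := p.edges.head?.elim p.source G.rng
  edges := p.edges.tail
  head_src := by
    cases hp : p.edges with
    | nil => simp
    | cons a l =>
      have h := p.chain
      rw [hp] at h
      replace h := List.isChain_cons.mp h
      intro e he
      simp only [hp, List.head?_cons, Option.elim, List.tail_cons] at he ⊢
      exact (h.1 e he).symm
  chain := p.chain.tail

/-- An infinite path in the graph `G`. -/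
structure IPath (G : FinGraph) where
  edges : ℕ → G.E
  chain : ∀ i, G.rng (edges i) = G.src (edges (i + 1))

/-- The source vertex of an infinite path. -/
def IPath.source (p : IPath G) : G.V := G.src (p.edges 0)

/-- The cylinder set `Z(p)` of a finite path `p`: all infinite paths with prefix `p`. -/
def cylinder (p : FPath G) : Set (IPath G) :=
  {q | q.source = p.source ∧ ∀ i, (h : i < p.edges.length) → q.edges i = p.edges.get ⟨i, h⟩}

/-- A finite collection `S` of finite paths is a partition of the path `ν`:
the cylinder sets are pairwise disjoint with union `Z(ν)`. -/
def IsPartitionOfPath (S : Set (FPath G)) (ν : FPath G) : Prop :=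
  S.Finite ∧ (∀ p ∈ S, ∀ q ∈ S, p ≠ q → cylinder p ∩ cylinder q = ∅) ∧
    (⋃ p ∈ S, cylinder p) = cylinder ν

/-- A finite collection `S` of finite paths is a partition of the vertex `v`. -/
def IsPartitionOf (S : Set (FPath G)) (v : G.V) : Prop :=
  IsPartitionOfPath S (FPath.nil G v)

/-- Standing assumptions: no sinks, no sources, every cycle has an exit. -/
structure Standing (G : FinGraph) : Prop where
  no_sinks : ∀ v : G.V, ∃ e, G.src e = v
  no_sources : ∀ v : G.V, ∃ e, G.rng e = v
  cycles_exit : ∀ p : FPath G, p.edges ≠ [] → p.range = p.source →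
    ∃ e ∈ p.edges, ∃ f, f ≠ e ∧ G.src f = G.src e

/-- The combinatorial conditions making `u_J = Σ_{(μ,ν) ∈ J} S_μ S_ν^*` a unitary:
`J` is finite, `s(μ) = s(ν)`, `r(μ) = r(ν)`, `|ν| ≥ 1` for all `(μ,ν) ∈ J`, and both
families of cylinder sets are pairwise disjoint with union all of `E^∞`. -/
structure IsUnitaryJ (G : FinGraph) (J : Set (FPath G × FPath G)) : Prop where
  finite : J.Finite
  src_eq : ∀ p ∈ J, (Prod.fst p).source = (Prod.snd p).source
  rng_eq : ∀ p ∈ J, FPath.range (Prod.fst p) = FPath.range (Prod.snd p)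
  ne_nil : ∀ p ∈ J, (Prod.snd p).edges ≠ []
  disj₁ : ∀ p ∈ J, ∀ q ∈ J, p ≠ q → cylinder (Prod.fst p) ∩ cylinder (Prod.fst q) = ∅
  union₁ : (⋃ p ∈ J, cylinder (Prod.fst p)) = Set.univ
  disj₂ : ∀ p ∈ J, ∀ q ∈ J, p ≠ q → cylinder (Prod.snd p) ∩ cylinder (Prod.snd q) = ∅
  union₂ : (⋃ p ∈ J, cylinder (Prod.snd p)) = Set.univ

/-- Adjacency in the coding graph `E_J`: there is an edge from `p = (μ₁, e₁ν₁)` to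
`q = (μ₂, e₂ν₂)` iff the tail `ν₁` and `μ₂` are prefix-comparable
(the combinatorial content of `S_{ν₁}^* S_{μ₂} ≠ 0`). -/
def CGAdj (p q : FPath G × FPath G) : Prop :=
  FPath.Prefix p.2.tail q.1 ∨ FPath.Prefix q.1 p.2.tail

/-- The degree `|μ₂| − |ν₁|` of the coding-graph edge from `p` to `q`. -/
def cgDeg (p q : FPath G × FPath G) : ℤ :=
  (q.1.edges.length : ℤ) - (p.2.tail.edges.length : ℤ)

/-- `IsAppend p q r` : the path `r` is the concatenation `p q`. -/
def IsAppend (p q r : FPath G) : Prop :=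
  r.source = p.source ∧ q.source = p.range ∧ r.edges = p.edges ++ q.edges

/-- A finite path in the coding graph `E_J`, recorded by the (nonempty) list of
vertices of `J` it visits (a single vertex is a path of length 0). -/
structure CGPath (G : FinGraph) (J : Set (FPath G × FPath G)) where
  verts : List (FPath G × FPath G)
  ne : verts ≠ []
  mem : ∀ v ∈ verts, v ∈ J
  adj : verts.Chain' CGAdj

/-- The `E`-label of a path in the coding graph: the list of distinguished first
edges `e` of the second coordinates of the vertices it visits. -/
def CGPath.elabel {J : Set (FPath G × FPath G)} (ω : CGPath G J) : List G.E :=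
  ω.verts.filterMap fun v => v.2.edges.head?

/-- `IsLabelOf l γ` : `γ` is the `L_J`-label of the coding-graph path visiting the
vertices in the list `l` (all of whose edges are non-negative): the concatenation of
the `L_J`-labels of its edges, and the empty path at `r(μ)` for the length-0 path
at a vertex `(μ, eν)`. -/
inductive IsLabelOf : List (FPath G × FPath G) → FPath G → Prop
  | single (p : FPath G × FPath G) (γ : FPath G) :
      γ.edges = [] → γ.source = FPath.range p.1 → IsLabelOf [p] γ
  | cons (p q : FPath G × FPath G) (rest : List (FPath G × FPath G)) (α γ δ : FPath G) :
      IsAppend p.2.tail α q.1 → IsLabelOf (q :: rest) γ → IsAppend α γ δ →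
      IsLabelOf (p :: q :: rest) δ

/-- Every edge of the coding graph `E_J` is non-negative. -/
def AllEdgesNonneg (G : FinGraph) (J : Set (FPath G × FPath G)) : Prop :=
  ∀ p ∈ J, ∀ q ∈ J, CGAdj p q → 0 ≤ cgDeg p q

/-- The coding graph `E_J` contains a non-positive cycle. -/
def HasNonposCycle (G : FinGraph) (J : Set (FPath G × FPath G)) : Prop :=
  ∃ ω : CGPath G J, 2 ≤ ω.verts.length ∧ ω.verts.getLast ω.ne = ω.verts.head ω.ne ∧
    ω.verts.Chain' fun p q => cgDeg p q ≤ 0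

/-- All outgoing edges of the vertex `p` in the coding graph `E_J` are positive. -/
def AllOutPositive (G : FinGraph) (J : Set (FPath G × FPath G))
    (p : FPath G × FPath G) : Prop :=
  ∀ q ∈ J, CGAdj p q → 0 < cgDeg p q

/-- `IsSnoc p f q` : the path `q` is `p` extended by the single edge `f`. -/
def IsSnoc (p : FPath G) (f : G.E) (q : FPath G) : Prop :=
  q.source = p.source ∧ q.edges = p.edges ++ [f]

/-- `IsSplitting G J p J'` : `J'` is the splitting of `J` at the vertex `p = (μ, eν)`,
i.e. `J' = (J ∖ {(μ,eν)}) ∪ {(μf, eνf) : f ∈ E¹, s(f) = r(μ)}`. -/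
def IsSplitting (G : FinGraph) (J : Set (FPath G × FPath G)) (p : FPath G × FPath G)
    (J' : Set (FPath G × FPath G)) : Prop :=
  p ∈ J ∧ ∀ q, q ∈ J' ↔ (q ∈ J ∧ q ≠ p) ∨
    ∃ f, G.src f = FPath.range p.1 ∧ IsSnoc p.1 f q.1 ∧ IsSnoc p.2 f q.2

/-- The set of negative edges of the coding graph `E_J`. -/
def negEdgeSet (G : FinGraph) (J : Set (FPath G × FPath G)) :
    Set ((FPath G × FPath G) × (FPath G × FPath G)) :=
  {e | e.1 ∈ J ∧ e.2 ∈ J ∧ CGAdj e.1 e.2 ∧ cgDeg e.1 e.2 < 0}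

/-- `IsFinalNeg G J p q ω d` : the edge from `p` to `q` in `E_J` is a final negative
edge with destination `d`, via the zero path `ω` from `q` to `d`; the height of the
edge is `ω.verts.length - 1`. -/
def IsFinalNeg (G : FinGraph) (J : Set (FPath G × FPath G))
    (p q : FPath G × FPath G) (ω : CGPath G J) (d : FPath G × FPath G) : Prop :=
  p ∈ J ∧ q ∈ J ∧ CGAdj p q ∧ cgDeg p q < 0 ∧
    ω.verts.head ω.ne = q ∧ ω.verts.getLast ω.ne = d ∧
    (ω.verts.Chain' fun a b => cgDeg a b = 0) ∧ AllOutPositive G J d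

/-- `(E_J, E)` is left-synchronizing with delay `m` : any two paths of length `m`
(i.e. with `m+1` vertices) in `E_J` with the same `E`-label have the same source. -/
def LeftSyncDelay (G : FinGraph) (J : Set (FPath G × FPath G)) (m : ℕ) : Prop :=
  ∀ ω ξ : CGPath G J, ω.verts.length = m + 1 → ξ.verts.length = m + 1 →
    ω.elabel = ξ.elabel → ω.verts.head ω.ne = ξ.verts.head ξ.ne

/-- An infinite path in the coding graph `E_J`. -/
structure CGIPath (G : FinGraph) (J : Set (FPath G × FPath G)) where
  verts : ℕ → FPath G × FPath G
  mem : ∀ i, verts i ∈ J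
  adj : ∀ i, CGAdj (verts i) (verts (i + 1))

/-- The infinite `E`-label of an infinite coding-graph path is the infinite path `α`. -/
def ELabelInf {J : Set (FPath G × FPath G)} (ω : CGIPath G J) (α : IPath G) : Prop :=
  ∀ i, (ω.verts i).2.edges.head? = some (α.edges i)

/-- A transducer with input alphabet `A`, output alphabet `B`, a finite state set,
an initial state and a transition function. -/
structure Transducer (A B : Type) where
  S : Type
  finS : Finite S
  init : S
  tr : S → A → S × List B

/-- The state sequence of a transducer on an infinite input word. -/
def Transducer.states {A B : Type} (T : Transducer A B) (α : ℕ → A) : ℕ → T.S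
  | 0 => T.init
  | n + 1 => (T.tr (T.states α n) (α n)).1

/-- The `n`-th output block of a transducer on an infinite input word. -/
def Transducer.outBlock {A B : Type} (T : Transducer A B) (α : ℕ → A) (n : ℕ) : List B :=
  (T.tr (T.states α n) (α n)).2

/-- The concatenation of the first `n` blocks of a sequence of finite words. -/
def joinUpTo {X : Type} (f : ℕ → List X) (n : ℕ) : List X :=
  ((List.range n).map f).flatten

/-- Two infinite concatenations of sequences of finite words are equal. -/
def StreamsEq {X : Type} (f g : ℕ → List X) : Prop :=
  (∀ n, ∃ m, joinUpTo f n <+: joinUpTo g m) ∧ ∀ n, ∃ m, joinUpTo g n <+: joinUpTo f m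

/-- The type of edges of the coding graph `E_J`. -/
def CGEdgeT (G : FinGraph) (J : Set (FPath G × FPath G)) : Type :=
  {e : (FPath G × FPath G) × (FPath G × FPath G) // e.1 ∈ J ∧ e.2 ∈ J ∧ CGAdj e.1 e.2}

/-- The sequence of edges of an infinite coding-graph path. -/
def CGIPath.edgeSeq {J : Set (FPath G × FPath G)} (ω : CGIPath G J) (i : ℕ) : CGEdgeT G J :=
  ⟨(ω.verts i, ω.verts (i + 1)), ω.mem i, ω.mem (i + 1), ω.adj i⟩


/- Since `μ₂ ≼ ν` and `μ₃` is prefix-comparable with `ν`, the paths `μ₂` and `μ₃` are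
prefix-comparable, so their cylinder sets are nested. As `E` has no sinks, every cylinder set is
nonempty, and the disjointness of the cylinders `Z(μ)` over `J` forces `μ₃ = μ₂`. -/

namespace FPath

noncomputable def extendEdges (hG : ∀ v : G.V, ∃ e, G.src e = v) (r : FPath G) : ℕ → G.E
  | 0 => if h : 0 < r.edges.length then r.edges[0] else (hG r.source).choose
  | n + 1 => if h : n + 1 < r.edges.length then r.edges[n + 1]
      else (hG (G.rng (extendEdges hG r n))).choose

variable (hG : ∀ v : G.V, ∃ e, G.src e = v) (r : FPath G)

theorem extendEdges_of_lt {i : ℕ} (h : i < r.edges.length) :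
    r.extendEdges hG i = r.edges[i] := by
  cases i <;> simp [extendEdges, h]

theorem src_extendEdges_zero : G.src (r.extendEdges hG 0) = r.source := by
  by_cases h : 0 < r.edges.length
  · rw [extendEdges_of_lt hG r h]
    exact r.head_src _ (by simp [List.head?_eq_getElem?, h])
  · simpa [extendEdges, h] using (hG r.source).choose_spec

theorem rng_extendEdges (i : ℕ) :
    G.rng (r.extendEdges hG i) = G.src (r.extendEdges hG (i + 1)) := by
  by_cases h : i + 1 < r.edges.length
  · rw [extendEdges_of_lt hG r h, extendEdges_of_lt hG r (by omega)]
    exact List.isChain_iff_getElem.mp r.chain i h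
  · simpa [extendEdges, h] using (hG (G.rng (r.extendEdges hG i))).choose_spec.symm

noncomputable def extend : IPath G :=
  ⟨r.extendEdges hG, r.rng_extendEdges hG⟩

theorem extend_mem_cylinder : r.extend hG ∈ cylinder r :=
  ⟨r.src_extendEdges_zero hG, fun _ h => r.extendEdges_of_lt hG h⟩

end FPath

theorem cylinder_nonempty (hG : ∀ v : G.V, ∃ e, G.src e = v) (r : FPath G) :
    (cylinder r).Nonempty :=
  ⟨r.extend hG, r.extend_mem_cylinder hG⟩

namespace FPath.Prefix

variable {a b c : FPath G}

theorem trans (hab : a.Prefix b) (hbc : b.Prefix c) : a.Prefix c :=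
  ⟨hab.1.trans hbc.1, hab.2.trans hbc.2⟩

theorem total_of_prefix (hac : a.Prefix c) (hbc : b.Prefix c) : a.Prefix b ∨ b.Prefix a :=
  (List.prefix_or_prefix_of_prefix hac.2 hbc.2).imp
    (⟨hac.1.trans hbc.1.symm, ·⟩) (⟨hbc.1.trans hac.1.symm, ·⟩)

theorem cylinder_subset (hab : a.Prefix b) : cylinder b ⊆ cylinder a := by
  rintro x ⟨hsrc, hedges⟩
  refine ⟨hsrc.trans hab.1.symm, fun i hi => ?_⟩
  rw [hedges i (hi.trans_le hab.2.length_le)]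
  simpa using (hab.2.getElem hi).symm

end FPath.Prefix

theorem IsUnitaryJ.fst_eq_of_prefix_or_prefix {J : Set (FPath G × FPath G)}
    (hJ : IsUnitaryJ G J) (hG : ∀ v : G.V, ∃ e, G.src e = v) {q q' : FPath G × FPath G}
    (hq : q ∈ J) (hq' : q' ∈ J) (h : q.1.Prefix q'.1 ∨ q'.1.Prefix q.1) : q'.1 = q.1 := by
  by_contra hne
  have hdisj := Set.eq_empty_iff_forall_notMem.mp <|
    hJ.disj₁ q hq q' hq' (by rintro rfl; exact hne rfl)
  rcases h with h | h
  · obtain ⟨x, hx⟩ := cylinder_nonempty hG q'.1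
    exact hdisj x ⟨h.cylinder_subset hx, hx⟩
  · obtain ⟨x, hx⟩ := cylinder_nonempty hG q.1
    exact hdisj x ⟨hx, h.cylinder_subset hx⟩

theorem nonpos_edge_unique_general (G : FinGraph) (hG : Standing G)
    (J : Set (FPath G × FPath G)) (hJ : IsUnitaryJ G J)
    (p : FPath G × FPath G)
    (q : FPath G × FPath G) (hq : q ∈ J) (hneg : FPath.Prefix q.1 p.2.tail) :
    ∀ q' ∈ J, (FPath.Prefix p.2.tail q'.1 ∨ FPath.Prefix q'.1 p.2.tail) →
      q'.1 = q.1 := by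
  rintro q' hq' (h | h)
  · exact hJ.fst_eq_of_prefix_or_prefix hG.no_sinks hq hq' (.inl (hneg.trans h))
  · exact hJ.fst_eq_of_prefix_or_prefix hG.no_sinks hq hq' (hneg.total_of_prefix h)

/-- Lemma 3.4(i): if the vertex `(μ, eν)` of `E_J` emits a non-positive
edge, i.e. there is an edge to some `(μ₂, e₂ν₂) ∈ J` with `μ₂ ≼ ν`, then it emits no
other edge: every `(μ₃, e₃ν₃) ∈ J` with `ν ≼ μ₃` or `μ₃ ≼ ν` has `μ₃ = μ₂`. -/
theorem nonpos_edge_unique (G : FinGraph) (hG : Standing G)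
    (J : Set (FPath G × FPath G)) (hJ : IsUnitaryJ G J)
    (p : FPath G × FPath G) (hp : p ∈ J)
    (q : FPath G × FPath G) (hq : q ∈ J) (hneg : FPath.Prefix q.1 p.2.tail) :
    ∀ q' ∈ J, (FPath.Prefix p.2.tail q'.1 ∨ FPath.Prefix q'.1 p.2.tail) →
      q'.1 = q.1 :=
  nonpos_edge_unique_general G hG J hJ p q hq hneg
end

section
/- Let J be as given and let J' be the splitting of J at a vertex (μ, eν) ∈ J. Then J' again satisfies the defining conditions on J: every (μ', ν') ∈ J' satisfies s(μ') = s(ν'), r(μ') = r(ν') and |ν'| ≥ 1, and both families of cylinder sets {Z(μ') : (μ', ν') ∈ J'} and {Z(ν') : (μ', ν') ∈ J'} are pairwise disjoint with union E^∞. (This is the combinatorial content of the identity u_{J'} = u_J for the associated unitaries.) -/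
variable {G : FinGraph}

/-! The cylinders `Z(μf)`, `s(f) = r(μ)`, partition `Z(μ)`: an infinite path through `μ`
continues with exactly one edge `f`. Since `r(μ) = r(eν)`, the same edges make the cylinders
`Z(eνf)` partition `Z(eν)`. Replacing one block of a partition by a partition of that block
gives again a partition, and the conditions on sources, ranges and lengths are immediate for
the new pairs `(μf, eνf)`. -/

section Refinement

variable {ι κ X : Type*} {J : Set ι} {C : ι → Set X} {p : ι} {q : κ → ι}

theorem Set.PairwiseDisjoint.diff_singleton_union_range (hJ : J.PairwiseDisjoint C)
    (hp : p ∈ J) (hq : Pairwise (Function.onFun Disjoint (C ∘ q)))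
    (hcover : ⋃ f, C (q f) = C p) :
    (J \ {p} ∪ Set.range q).PairwiseDisjoint C := by
  have hsub (f : κ) : C (q f) ⊆ C p := hcover ▸ Set.subset_iUnion (C ∘ q) f
  rintro a (⟨ha, hap⟩ | ⟨f, rfl⟩) b (⟨hb, hbp⟩ | ⟨g, rfl⟩) hab
  · exact hJ ha hb hab
  · exact (hJ ha hp hap).mono_right (hsub g)
  · exact (hJ hp hb (Ne.symm hbp)).mono_left (hsub f)
  · exact hq fun hfg => hab (congrArg q hfg)

theorem Set.biUnion_diff_singleton_union_range (hp : p ∈ J) (hcover : ⋃ f, C (q f) = C p) :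
    ⋃ i ∈ J \ {p} ∪ Set.range q, C i = ⋃ i ∈ J, C i := by
  rw [Set.biUnion_union, Set.biUnion_range, hcover, Set.union_comm, ← Set.biUnion_insert,
    Set.insert_sdiff_singleton, Set.insert_eq_of_mem hp]

end Refinement

theorem FPath.ext' {a b : FPath G} (hs : a.source = b.source) (he : a.edges = b.edges) :
    a = b := by
  cases a; cases b; simp_all

theorem FPath.range_eq_rng_of_getLast? {a : FPath G} {e : G.E}
    (h : a.edges.getLast? = some e) : a.range = G.rng e := by
  simp [FPath.range, h]

def FPath.snoc (a : FPath G) (f : G.E) (h : G.src f = a.range) : FPath G where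
  source := a.source
  edges := a.edges ++ [f]
  head_src := by
    cases ha : a.edges with
    | nil =>
      intro e he
      simp only [List.nil_append, List.head?_cons, Option.mem_def, Option.some.injEq] at he
      subst he
      simpa [FPath.range, ha] using h
    | cons e l =>
      intro e' he'
      simp only [List.cons_append, List.head?_cons, Option.mem_def, Option.some.injEq] at he'
      subst he'
      exact a.head_src e (by simp [ha])
  chain := by
    refine List.IsChain.append a.chain (List.isChain_singleton f) ?_
    rintro e he _ ⟨⟩
    exact (h.trans (FPath.range_eq_rng_of_getLast? he)).symm

theorem FPath.range_snoc (a : FPath G) (f : G.E) (h) : (a.snoc f h).range = G.rng f := by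
  simp [FPath.snoc, FPath.range]

theorem mem_cylinder_snoc {a : FPath G} {f : G.E} {h} {x : IPath G} :
    x ∈ cylinder (a.snoc f h) ↔ x ∈ cylinder a ∧ x.edges a.edges.length = f := by
  constructor
  · rintro ⟨hs, hi⟩
    refine ⟨⟨hs, fun i hl => ?_⟩, ?_⟩
    · rw [hi i (by simp [FPath.snoc]; omega)]
      simp [FPath.snoc, List.getElem_append_left hl]
    · rw [hi a.edges.length (by simp [FPath.snoc])]
      simp [FPath.snoc]
  · rintro ⟨⟨hs, hi⟩, hf⟩
    refine ⟨hs, fun i hl => ?_⟩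
    simp only [FPath.snoc, List.length_append, List.length_singleton] at hl
    rcases Nat.lt_or_ge i a.edges.length with hlt | hge
    · simp [FPath.snoc, hi i hlt, List.getElem_append_left hlt]
    · obtain rfl : i = a.edges.length := by omega
      simp [FPath.snoc, hf]

theorem src_edges_of_mem_cylinder {a : FPath G} {x : IPath G} (hx : x ∈ cylinder a) :
    G.src (x.edges a.edges.length) = a.range := by
  obtain ⟨hs, hi⟩ := hx
  rcases List.eq_nil_or_concat' a.edges with ha | ⟨l, e, ha⟩
  · simpa [FPath.range, IPath.source, ha] using hs
  · have hlast : x.edges l.length = e := by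
      simpa [ha] using hi l.length (by simp [ha])
    rw [FPath.range_eq_rng_of_getLast? (e := e) (by simp [ha]), ha, List.length_append,
      List.length_singleton, ← x.chain, hlast]

section Snoc

-- Indexing by the edges leaving some `v = r(a)` lets `μ` and `eν` share one index type.
variable (a : FPath G) {v : G.V} (hv : v = a.range)

theorem iUnion_cylinder_snoc :
    ⋃ f : {f : G.E // G.src f = v}, cylinder (a.snoc f (f.2.trans hv)) = cylinder a := by
  refine Set.Subset.antisymm (Set.iUnion_subset fun f => fun x hx => (mem_cylinder_snoc.1 hx).1)
    fun x hx => Set.mem_iUnion.2 ?_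
  exact ⟨⟨x.edges a.edges.length, (src_edges_of_mem_cylinder hx).trans hv.symm⟩,
    mem_cylinder_snoc.2 ⟨hx, rfl⟩⟩

theorem pairwise_disjoint_cylinder_snoc :
    Pairwise (Function.onFun Disjoint
      fun f : {f : G.E // G.src f = v} => cylinder (a.snoc f (f.2.trans hv))) :=
  fun _ _ hfg => Set.disjoint_left.2 fun _ hxf hxg =>
    hfg (Subtype.ext ((mem_cylinder_snoc.1 hxf).2.symm.trans (mem_cylinder_snoc.1 hxg).2))

end Snoc

/-- The pair `(μf, eνf)` of the splitting at `p = (μ, eν)`. -/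
def splitPair (p : FPath G × FPath G) (hr : p.1.range = p.2.range)
    (f : {f : G.E // G.src f = p.1.range}) : FPath G × FPath G :=
  (p.1.snoc f f.2, p.2.snoc f (f.2.trans hr))

theorem IsSplitting.eq_diff_union_range {J J' : Set (FPath G × FPath G)} {p : FPath G × FPath G}
    (h : IsSplitting G J p J') (hr : p.1.range = p.2.range) :
    J' = J \ {p} ∪ Set.range (splitPair p hr) := by
  ext q
  rw [h.2 q]
  refine or_congr Iff.rfl ⟨?_, ?_⟩
  · rintro ⟨f, hf, h₁, h₂⟩
    exact ⟨⟨f, hf⟩,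
      Prod.ext (FPath.ext' h₁.1.symm h₁.2.symm) (FPath.ext' h₂.1.symm h₂.2.symm)⟩
  · rintro ⟨f, rfl⟩
    exact ⟨f, f.2, ⟨rfl, rfl⟩, ⟨rfl, rfl⟩⟩

theorem IsUnitaryJ.pairwiseDisjoint_fst {J : Set (FPath G × FPath G)} (hJ : IsUnitaryJ G J) :
    J.PairwiseDisjoint (cylinder ∘ Prod.fst) :=
  fun _ ha _ hb hab => Set.disjoint_iff_inter_eq_empty.2 (hJ.disj₁ _ ha _ hb hab)

theorem IsUnitaryJ.pairwiseDisjoint_snd {J : Set (FPath G × FPath G)} (hJ : IsUnitaryJ G J) :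
    J.PairwiseDisjoint (cylinder ∘ Prod.snd) :=
  fun _ ha _ hb hab => Set.disjoint_iff_inter_eq_empty.2 (hJ.disj₂ _ ha _ hb hab)

theorem splitting_preserves_unitary_general (G : FinGraph)
    (J : Set (FPath G × FPath G)) (hJ : IsUnitaryJ G J)
    (p : FPath G × FPath G)
    (J' : Set (FPath G × FPath G)) (hsplit : IsSplitting G J p J') :
    IsUnitaryJ G J' := by
  have hp := hsplit.1
  have hr := hJ.rng_eq p hp
  obtain rfl := hsplit.eq_diff_union_range hr
  have := G.fintE
  have hcover₁ : ⋃ f, cylinder (splitPair p hr f).1 = cylinder p.1 :=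
    iUnion_cylinder_snoc p.1 rfl
  have hcover₂ : ⋃ f, cylinder (splitPair p hr f).2 = cylinder p.2 :=
    iUnion_cylinder_snoc p.2 hr
  have hdisj₁ := Set.PairwiseDisjoint.diff_singleton_union_range hJ.pairwiseDisjoint_fst hp
    (pairwise_disjoint_cylinder_snoc p.1 rfl) hcover₁
  have hdisj₂ := Set.PairwiseDisjoint.diff_singleton_union_range hJ.pairwiseDisjoint_snd hp
    (pairwise_disjoint_cylinder_snoc p.2 hr) hcover₂
  refine ⟨(hJ.finite.sdiff).union (Set.finite_range _), ?_, ?_, ?_,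
    fun a ha b hb hab => Set.disjoint_iff_inter_eq_empty.1 (hdisj₁ ha hb hab), ?_,
    fun a ha b hb hab => Set.disjoint_iff_inter_eq_empty.1 (hdisj₂ ha hb hab), ?_⟩
  · rintro q (⟨hq, -⟩ | ⟨f, rfl⟩)
    exacts [hJ.src_eq q hq, hJ.src_eq p hp]
  · rintro q (⟨hq, -⟩ | ⟨f, rfl⟩)
    exacts [hJ.rng_eq q hq, by simp only [splitPair, FPath.range_snoc]]
  · rintro q (⟨hq, -⟩ | ⟨f, rfl⟩)
    exacts [hJ.ne_nil q hq, by simp [splitPair, FPath.snoc]]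
  · rw [Set.biUnion_diff_singleton_union_range hp hcover₁, hJ.union₁]
  · rw [Set.biUnion_diff_singleton_union_range hp hcover₂, hJ.union₂]

/-- the splitting `J'` of `J` at a vertex `(μ, eν) ∈ J` again satisfies the
defining conditions of `J` (the combinatorial content of `u_{J'} = u_J`). -/
theorem splitting_preserves_unitary (G : FinGraph) (hG : Standing G)
    (J : Set (FPath G × FPath G)) (hJ : IsUnitaryJ G J)
    (p : FPath G × FPath G) (hp : p ∈ J)
    (J' : Set (FPath G × FPath G)) (hsplit : IsSplitting G J p J') :
    IsUnitaryJ G J' :=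
  splitting_preserves_unitary_general G J hJ p J' hsplit
end
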